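/- arXiv:0901.2269 — 2 statements merged into one kernel-verified Lean document; each statement's English description precedes it below -/
import Mathlib

section
/- Fix t ∈ ℕ₀ and define g_t := sup{s ≤ t : X_s ∈ K} (sup over empty set = −∞). For s ∈ {0,…,t−1}, under the supermartingale assumption on φ(·∧τ_K, X_{·∧τ_K}) started outside K, with φ(t,x) ≥ V(x)/θ(t), one has E_{x₀}[V(X_t) 1_{g_t = s}] ≤ θ(t−s−1) · sup_{x∈K} E_x[φ(0, X₁) 1_{X₁ ∈ S\K}]. -/
open MeasureTheory ProbabilityTheory

/-- Iterates of a Markov transition kernel. -/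
noncomputable def kiter {S : Type*} [MeasurableSpace S] (κ : Kernel S S) : ℕ → Kernel S S
  | 0 => Kernel.id
  | n + 1 => κ ∘ₖ kiter κ n

instance kiter.isFiniteKernel {S : Type*} [MeasurableSpace S] (κ : Kernel S S)
    [IsFiniteKernel κ] (n : ℕ) : IsFiniteKernel (kiter κ n) := by
  induction n with
  | zero => exact (by unfold kiter; infer_instance)
  | succ n ih => unfold kiter; exact Kernel.IsFiniteKernel.comp κ (kiter κ n)

instance kiter.isMarkovKernel {S : Type*} [MeasurableSpace S] (κ : Kernel S S)
    [IsMarkovKernel κ] (n : ℕ) : IsMarkovKernel (kiter κ n) := by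
  induction n with
  | zero => exact (by unfold kiter; infer_instance)
  | succ n ih => unfold kiter; exact Kernel.IsMarkovKernel.comp κ (kiter κ n)

lemma kiter_succ' {S : Type*} [MeasurableSpace S] (κ : Kernel S S) [IsFiniteKernel κ] (n : ℕ) :
    kiter κ (n + 1) = (kiter κ n) ∘ₖ κ := by
  induction n with
  | zero => show κ ∘ₖ Kernel.id = Kernel.id ∘ₖ κ; simp
  | succ n ih =>
      show κ ∘ₖ kiter κ (n + 1) = (κ ∘ₖ kiter κ n) ∘ₖ κ
      rw [ih, ← Kernel.comp_assoc]

/-- Case 1 of the proof of the main theorem: fix `t` and let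
`g_t = sup{s ≤ t : X_s ∈ K}`.  For `s ∈ {0,…,t−1}`, under the supermartingale (drift)
assumption on `φ(·∧τ_K, X_{·∧τ_K})` for starts outside `K`, with `φ(t,x) ≥ V(x)/θ(t)`,
one has `E_{x₀}[V(X_t) 1_{g_t = s}] ≤ θ(t−s−1) · β`, where
`β ≥ sup_{x∈K} E_x[φ(0,X₁) 1_{X₁ ∈ S\K}]`.  The event `{g_t = s}` is
`{X_s ∈ K, X_i ∉ K for i = s+1,…,t}`, so the expectation is expressed by first running
the chain `s` steps, landing in `K`, and then running `t−s` steps of the kernel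
restricted to `Kᶜ`. -/
theorem stmt_2 {S : Type*} [MeasurableSpace S] [TopologicalSpace S]
    [PolishSpace S] [BorelSpace S]
    (K : Set S) (hK : MeasurableSet K)
    (κ : Kernel S S) [IsMarkovKernel κ]
    (φ : ℕ → S → ℝ) (hφmeas : ∀ t, Measurable (φ t)) (hφ0 : ∀ t x, 0 ≤ φ t x)
    (V : S → ℝ) (hVmeas : Measurable V) (hV0 : ∀ x, 0 ≤ V x)
    (θ : ℕ → ℝ) (hθ : ∀ t, 0 < θ t)
    (hφV : ∀ t x, V x / θ t ≤ φ t x)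
    (hdrift : ∀ (n : ℕ), ∀ x ∉ K,
      ∫⁻ y, ENNReal.ofReal (φ (n + 1) y) ∂(κ x) ≤ ENNReal.ofReal (φ n x))
    (β : ℝ)
    (hβ : ∀ x ∈ K, ∫⁻ y in Kᶜ, ENNReal.ofReal (φ 0 y) ∂(κ x) ≤ ENNReal.ofReal β)
    (x₀ : S) (s t : ℕ) (hst : s < t) :
    ∫⁻ x in K,
        (∫⁻ y, ENNReal.ofReal (V y) ∂((kiter (κ.restrict hK.compl) (t - s)) x))
        ∂((kiter κ s) x₀)
      ≤ ENNReal.ofReal (θ (t - s - 1) * β) := by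
  set κ' := κ.restrict hK.compl with hκ'
  -- key claim: for x ∉ K, ∫ φ(n+j) d(kiter κ' j x) ≤ φ n x
  have claim : ∀ (j n : ℕ), ∀ x ∉ K,
      ∫⁻ y, ENNReal.ofReal (φ (n + j) y) ∂((kiter κ' j) x) ≤ ENNReal.ofReal (φ n x) := by
    intro j
    induction j with
    | zero =>
        intro n x hx
        show ∫⁻ y, ENNReal.ofReal (φ (n + 0) y) ∂(Kernel.id x) ≤ _
        rw [Kernel.id_apply, lintegral_dirac' _ ((hφmeas _).ennreal_ofReal)]
        simp
    | succ j ih =>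
        intro n x hx
        rw [kiter_succ', Kernel.lintegral_comp _ _ _ ((hφmeas _).ennreal_ofReal)]
        calc ∫⁻ y, ∫⁻ z, ENNReal.ofReal (φ (n + (j + 1)) z) ∂(kiter κ' j y) ∂(κ' x)
            ≤ ∫⁻ y, ENNReal.ofReal (φ (n + 1) y) ∂(κ' x) := by
              rw [hκ', Kernel.restrict_apply]
              refine setLIntegral_mono ((hφmeas _).ennreal_ofReal) (fun y hy => ?_)
              have := ih (n + 1) y hy
              simpa [add_assoc, add_comm 1 j] using this
          _ ≤ ∫⁻ y, ENNReal.ofReal (φ (n + 1) y) ∂(κ x) := by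
              rw [hκ', Kernel.restrict_apply]
              exact setLIntegral_le_lintegral _ _
          _ ≤ ENNReal.ofReal (φ n x) := hdrift n x hx
  -- bound the inner integral for x ∈ K
  obtain ⟨j, hj⟩ : ∃ j, t - s = j + 1 := ⟨t - s - 1, by omega⟩
  have hts1 : t - s - 1 = j := by omega
  have inner : ∀ x ∈ K,
      ∫⁻ y, ENNReal.ofReal (V y) ∂((kiter κ' (t - s)) x)
        ≤ ENNReal.ofReal (θ j * β) := by
    intro x hx
    rw [hj, kiter_succ', Kernel.lintegral_comp _ _ _ (hVmeas.ennreal_ofReal)]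
    have hmeasφ : Measurable fun y => ∫⁻ z, ENNReal.ofReal (φ j z) ∂(kiter κ' j y) :=
      Measurable.lintegral_kernel ((hφmeas j).ennreal_ofReal)
    calc ∫⁻ y, ∫⁻ z, ENNReal.ofReal (V z) ∂(kiter κ' j y) ∂(κ' x)
        ≤ ∫⁻ y, ENNReal.ofReal (θ j) * ∫⁻ z, ENNReal.ofReal (φ j z) ∂(kiter κ' j y) ∂(κ' x) := by
          refine lintegral_mono fun y => ?_
          rw [← lintegral_const_mul _ ((hφmeas j).ennreal_ofReal)]
          refine lintegral_mono fun z => ?_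
          rw [← ENNReal.ofReal_mul (hθ j).le]
          exact ENNReal.ofReal_le_ofReal ((div_le_iff₀' (hθ j)).mp (hφV j z))
      _ = ENNReal.ofReal (θ j) * ∫⁻ y, ∫⁻ z, ENNReal.ofReal (φ j z) ∂(kiter κ' j y) ∂(κ' x) :=
          lintegral_const_mul _ hmeasφ
      _ ≤ ENNReal.ofReal (θ j) * ∫⁻ y, ENNReal.ofReal (φ 0 y) ∂(κ' x) := by
          refine mul_le_mul_right ?_ _
          rw [hκ', Kernel.restrict_apply]
          refine setLIntegral_mono ((hφmeas _).ennreal_ofReal) (fun y hy => ?_)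
          simpa using claim j 0 y hy
      _ ≤ ENNReal.ofReal (θ j) * ENNReal.ofReal β := by
          refine mul_le_mul_right ?_ _
          rw [hκ', Kernel.restrict_apply]
          exact hβ x hx
      _ = ENNReal.ofReal (θ j * β) := (ENNReal.ofReal_mul (hθ j).le).symm
  calc ∫⁻ x in K, (∫⁻ y, ENNReal.ofReal (V y) ∂((kiter κ' (t - s)) x)) ∂((kiter κ s) x₀)
      ≤ ∫⁻ _ in K, ENNReal.ofReal (θ j * β) ∂((kiter κ s) x₀) :=
        setLIntegral_mono measurable_const (fun x hx => inner x hx)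
    _ ≤ ENNReal.ofReal (θ j * β) := by
        rw [setLIntegral_const]
        exact le_trans (mul_le_mul_right (prob_le_one) _) (by simp)
    _ = ENNReal.ofReal (θ (t - s - 1) * β) := by rw [hts1]
end

section
/- In the setting of the switched system under (V2) (V_i ≤ μ V_j whenever ‖x‖ > r) and (V3) (V_i(f_i(x)) ≤ λ∘ V_i(x)), the following pathwise inequality holds for all s ≤ t along every trajectory stopped at τ_r := inf{t : ‖X_t‖ ≤ r}: V'_{σ_{t∧τ_r}}(X_{t∧τ_r}) ≤ μ^{N_{t∧τ_r} − N_{s∧τ_r}} λ∘^{(t∧τ_r) − (s∧τ_r)} V'_{σ_{s∧τ_r}}(X_{s∧τ_r}), where V_i'(x) = V_i(x) 1_{‖x‖>r} and N counts switches of σ. -/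
open Classical

/-- First hitting time (from time `0`) of the set `A` by the deterministic path `x`. -/
noncomputable def hitTimePath {E : Type*} (x : ℕ → E) (A : Set E) : ℕ∞ :=
  sInf {n : ℕ∞ | ∃ m : ℕ, n = (m : ℕ∞) ∧ x m ∈ A}

/-- The stopped index `t ∧ τ_A` along the path `x`. -/
noncomputable def stopIdxPath {E : Type*} (x : ℕ → E) (A : Set E) (t : ℕ) : ℕ :=
  (min (t : ℕ∞) (hitTimePath x A)).toNat

lemma stopIdx_eq_self {E : Type*} (x : ℕ → E) (A : Set E) (t : ℕ)
    (h : ∀ m, m < t → x m ∉ A) : stopIdxPath x A t = t := by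
  unfold stopIdxPath
  have hle : (t : ℕ∞) ≤ hitTimePath x A := by
    apply le_sInf
    rintro n ⟨m, rfl, hm⟩
    by_contra hlt
    exact h m (by exact_mod_cast lt_of_not_ge (fun hh => hlt (by exact_mod_cast hh))) hm
  rw [min_eq_left hle]
  simp

lemma stopIdx_succ_eq {E : Type*} (x : ℕ → E) (A : Set E) (t m : ℕ)
    (hm : m ≤ t) (h : x m ∈ A) : stopIdxPath x A (t + 1) = stopIdxPath x A t := by
  unfold stopIdxPath
  have hτ : hitTimePath x A ≤ (m : ℕ∞) := sInf_le ⟨m, rfl, h⟩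
  have h1 : hitTimePath x A ≤ ((t + 1 : ℕ) : ℕ∞) :=
    hτ.trans (by exact_mod_cast hm.trans (Nat.le_succ t))
  have h2 : hitTimePath x A ≤ ((t : ℕ) : ℕ∞) := hτ.trans (by exact_mod_cast hm)
  rw [min_eq_right h1, min_eq_right h2]


/-- Pathwise inequality: along any trajectory of `x_{t+1} = f_{s_t}(x_t)`, under (V2)
(`V_i ≤ μ V_j` for `‖x‖ > r`) and (V3) (`V_i(f_i(x)) ≤ λ∘ V_i(x)`), stopping at
`τ_r = inf{t : ‖x_t‖ ≤ r}`, one has for all `s ≤ t`: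
`V'_{s_{t∧τ_r}}(x_{t∧τ_r}) ≤ μ^{N_{t∧τ_r} − N_{s∧τ_r}} λ∘^{(t∧τ_r)−(s∧τ_r)}
V'_{s_{s∧τ_r}}(x_{s∧τ_r})`, where `V_i'(x) = V_i(x) 1_{‖x‖>r}` and `N` counts the
switches of the switching sequence. -/
theorem stmt_18 {d N : ℕ}
    (f : Fin N → EuclideanSpace ℝ (Fin d) → EuclideanSpace ℝ (Fin d))
    (V : Fin N → EuclideanSpace ℝ (Fin d) → ℝ) (hV0 : ∀ i x, 0 ≤ V i x)
    (lam μ r : ℝ) (hlam : lam ∈ Set.Ioo (0 : ℝ) 1) (hμ : 1 < μ) (hr : 0 < r)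
    (hV2 : ∀ i j x, r < ‖x‖ → V i x ≤ μ * V j x)
    (hV3 : ∀ i x, V i (f i x) ≤ lam * V i x)
    (sig : ℕ → Fin N) (x : ℕ → EuclideanSpace ℝ (Fin d))
    (hx : ∀ t, x (t + 1) = f (sig t) (x t))
    (s t : ℕ) (hst : s ≤ t) :
    (if r < ‖x (stopIdxPath x {y | ‖y‖ ≤ r} t)‖ then
        V (sig (stopIdxPath x {y | ‖y‖ ≤ r} t)) (x (stopIdxPath x {y | ‖y‖ ≤ r} t))
      else 0)
      ≤ μ ^ ((∑ i ∈ Finset.range (stopIdxPath x {y | ‖y‖ ≤ r} t),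
              if sig i = sig (i + 1) then 0 else 1)
            - (∑ i ∈ Finset.range (stopIdxPath x {y | ‖y‖ ≤ r} s),
              if sig i = sig (i + 1) then 0 else 1))
        * lam ^ (stopIdxPath x {y | ‖y‖ ≤ r} t - stopIdxPath x {y | ‖y‖ ≤ r} s)
        * (if r < ‖x (stopIdxPath x {y | ‖y‖ ≤ r} s)‖ then
            V (sig (stopIdxPath x {y | ‖y‖ ≤ r} s)) (x (stopIdxPath x {y | ‖y‖ ≤ r} s))
          else 0) := by
  set A : Set (EuclideanSpace ℝ (Fin d)) := {y | ‖y‖ ≤ r} with hA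
  set n : ℕ → ℕ := stopIdxPath x A with hn
  set Vp : ℕ → ℝ := fun u => if r < ‖x u‖ then V (sig u) (x u) else 0 with hVp
  set Ns : ℕ → ℕ := fun u => ∑ i ∈ Finset.range u, if sig i = sig (i + 1) then 0 else 1
    with hNs
  show Vp (n t) ≤ μ ^ (Ns (n t) - Ns (n s)) * lam ^ (n t - n s) * Vp (n s)
  have hVp0 : ∀ u, 0 ≤ Vp u := by
    intro u; by_cases h : r < ‖x u‖ <;> simp [hVp, h, hV0]
  have hμ0 : (0:ℝ) ≤ μ := le_of_lt (lt_trans one_pos hμ)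
  have hlam0 : (0:ℝ) ≤ lam := le_of_lt hlam.1
  induction t, hst using Nat.le_induction with
  | base =>
      simp
  | succ t hst ih =>
      by_cases hhit : ∃ m ≤ t, x m ∈ A
      · obtain ⟨m, hm, hmA⟩ := hhit
        have : n (t + 1) = n t := stopIdx_succ_eq x A t m hm hmA
        rw [this]; exact ih
      · push_neg at hhit
        have hout : ∀ m, m ≤ t → r < ‖x m‖ := by
          intro m hm
          have := hhit m hm
          simpa [hA] using this
        have hnt : n t = t := stopIdx_eq_self x A t (fun m hm => hhit m hm.le)
        have hnt1 : n (t + 1) = t + 1 :=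
          stopIdx_eq_self x A (t + 1) (fun m hm => hhit m (Nat.lt_succ_iff.mp hm))
        have hns : n s = s := stopIdx_eq_self x A s (fun m hm => hhit m (hm.le.trans hst))
        -- one-step bound
        set δ : ℕ := if sig t = sig (t + 1) then 0 else 1 with hδ
        have hstep : Vp (t + 1) ≤ μ ^ δ * lam * Vp t := by
          have hxt : r < ‖x t‖ := hout t le_rfl
          by_cases hxt1 : r < ‖x (t + 1)‖
          · have h1 : V (sig (t + 1)) (x (t + 1)) ≤ μ ^ δ * V (sig t) (x (t + 1)) := by
              by_cases hsw : sig t = sig (t + 1)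
              · simp [hδ, hsw]
              · simp only [hδ, if_neg hsw, pow_one]
                exact hV2 _ _ _ hxt1
            have h2 : V (sig t) (x (t + 1)) ≤ lam * V (sig t) (x t) := by
              rw [hx t]; exact hV3 _ _
            simp only [hVp, if_pos hxt1, if_pos hxt]
            calc V (sig (t + 1)) (x (t + 1)) ≤ μ ^ δ * V (sig t) (x (t + 1)) := h1
              _ ≤ μ ^ δ * (lam * V (sig t) (x t)) := by
                  exact mul_le_mul_of_nonneg_left h2 (pow_nonneg hμ0 _)
              _ = μ ^ δ * lam * V (sig t) (x t) := by ring
          · simp only [hVp, if_neg hxt1]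
            exact mul_nonneg (mul_nonneg (pow_nonneg hμ0 _) hlam0) (hVp0 t)
        have hNmono : Ns s ≤ Ns t := by
          apply Finset.sum_le_sum_of_subset
          exact Finset.range_subset_range.mpr hst
        have hNsucc : Ns (t + 1) = Ns t + δ := Finset.sum_range_succ _ t
        rw [hnt1, hns, hNsucc]
        rw [hnt, hns] at ih
        calc Vp (t + 1) ≤ μ ^ δ * lam * Vp t := hstep
          _ ≤ μ ^ δ * lam * (μ ^ (Ns t - Ns s) * lam ^ (t - s) * Vp s) := by
              apply mul_le_mul_of_nonneg_left ih
              exact mul_nonneg (pow_nonneg hμ0 _) hlam0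
          _ = μ ^ (Ns t - Ns s + δ) * lam ^ (t - s + 1) * Vp s := by
              rw [pow_succ, pow_add]; ring
          _ = μ ^ (Ns t + δ - Ns s) * lam ^ (t + 1 - s) * Vp s := by
              rw [Nat.sub_add_comm hNmono, Nat.sub_add_comm hst]
end
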